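/- arXiv:math/9907176 — 3 statements merged into one kernel-verified Lean document; each statement's English description precedes it below -/
import Mathlib

section
/- For integers n ≥ 1 and a_1, ..., a_n with a_1 > 0, the expression ([a_1 + a_2 + ... + a_n] / [a_1]) · ∏_{i=1}^{n-1} qbinom(a_i + a_{i+1} - 1, a_{i+1}) is a polynomial in q with integer coefficients, i.e. belongs to ℤ[q]. -/
open Polynomial

noncomputable section

/-- The `q`-integer `[m] = (q^m - 1)/(q - 1)` in `ℚ(q)`, allowing integer `m`.
For `m ∈ ℕ` this is `1 + q + ⋯ + q^{m-1}`. -/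
def qintZ (m : ℤ) : RatFunc ℚ := (RatFunc.X ^ m - 1) / (RatFunc.X - 1)

/-- The `q`-factorial `[n]! = ∏_{k=1}^n [k]`. -/
def qfactF (n : ℕ) : RatFunc ℚ := ∏ k ∈ Finset.range n, qintZ (k + 1)

/-- The Gaussian binomial coefficient for integer arguments:
`qbinom(n, p) = 1` if `p = 0`, `0` if `p < 0` or `p > max(0, n)`, and
`[n]!/([p]! [n-p]!)` if `0 ≤ p ≤ n`. -/
def qbinomZ (n p : ℤ) : RatFunc ℚ :=
  if p = 0 then 1
  else if p < 0 ∨ p > max 0 n then 0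
  else qfactF n.toNat / (qfactF p.toNat * qfactF (n - p).toNat)

/-- `F_q(a_1, …, a_N) = ∏_{i=1}^{N-1} qbinom(a_i + a_{i+1} - 1, a_{i+1})`
(here `a i` is `a_{i+1}`, i.e. indices are shifted to start at `0`). -/
def Fq (N : ℕ) (a : ℕ → ℤ) : RatFunc ℚ :=
  ∏ i ∈ Finset.range (N - 1), qbinomZ (a i + a (i + 1) - 1) (a (i + 1))

end
/-!
Write `s_j = a_0 + ⋯ + a_{j-1}`, so that `[a_0 + ⋯ + a_{n-1}] = ∑_{j<n} q^{s_j} [a_j]`. It suffices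
that each `T_j = q^{s_j} ([a_j]/[a_0]) F_q(a_0, …, a_j)` is a polynomial, the remaining factors of
`F_q(a_0, …, a_{n-1})` being Gaussian binomials. The absorption identity
`[p] qbinom(x+p-1, p) = [x] qbinom(x+p-1, p-1)` (for `x > 0`) gives `T_{j+1} = T_j q^{a_j} qbinom(…)`,
and for `a_j ≤ 0` the new factor `[a_{j+1}] qbinom(a_j+a_{j+1}-1, a_{j+1})` vanishes, so `T_{j+1} = 0`.
-/

open Finset

noncomputable section

def intPolynomials : Subring (RatFunc ℚ) :=
  ((algebraMap ℚ[X] (RatFunc ℚ)).comp (mapRingHom (Int.castRingHom ℚ))).range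

lemma RatFunc.X_mem_intPolynomials : (RatFunc.X : RatFunc ℚ) ∈ intPolynomials :=
  ⟨Polynomial.X, by simp [RatFunc.algebraMap_X]⟩

lemma RatFunc.X_zpow_mem_intPolynomials {m : ℤ} (hm : 0 ≤ m) :
    (RatFunc.X : RatFunc ℚ) ^ m ∈ intPolynomials := by
  lift m to ℕ using hm
  rw [zpow_natCast]
  exact pow_mem RatFunc.X_mem_intPolynomials m

lemma RatFunc.X_pow_ne_one {K : Type*} [Field K] {n : ℕ} (hn : n ≠ 0) :
    (RatFunc.X : RatFunc K) ^ n ≠ 1 := by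
  rw [← RatFunc.algebraMap_X, ← map_pow, ← map_one (algebraMap K[X] (RatFunc K)),
    (RatFunc.algebraMap_injective K).ne_iff, ne_eq, ← sub_eq_zero, ← C_1]
  exact X_pow_sub_C_ne_zero (Nat.pos_of_ne_zero hn) 1

lemma qintZ_zero : qintZ 0 = 0 := by
  simp [qintZ]

lemma qintZ_natCast_ne_zero {n : ℕ} (hn : n ≠ 0) : qintZ n ≠ 0 := by
  rw [qintZ, zpow_natCast]
  refine div_ne_zero (sub_ne_zero.mpr (RatFunc.X_pow_ne_one hn)) (sub_ne_zero.mpr ?_)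
  simpa using RatFunc.X_pow_ne_one (K := ℚ) one_ne_zero

lemma qintZ_add (x y : ℤ) : qintZ (x + y) = qintZ x + RatFunc.X ^ x * qintZ y := by
  rw [qintZ, qintZ, qintZ, zpow_add₀ RatFunc.X_ne_zero, ← mul_div_assoc, ← add_div]
  ring

lemma qintZ_sum (a : ℕ → ℤ) (n : ℕ) :
    qintZ (∑ i ∈ range n, a i) = ∑ j ∈ range n, RatFunc.X ^ (∑ i ∈ range j, a i) * qintZ (a j) := by
  induction n with
  | zero => simp [qintZ_zero]
  | succ n ih => rw [sum_range_succ, qintZ_add, ih, sum_range_succ]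

lemma qfactF_zero : qfactF 0 = 1 :=
  prod_range_zero _

lemma qfactF_succ (n : ℕ) : qfactF (n + 1) = qfactF n * qintZ (n + 1 : ℕ) := by
  rw [qfactF, prod_range_succ, Nat.cast_succ]
  rfl

lemma qfactF_ne_zero (n : ℕ) : qfactF n ≠ 0 :=
  prod_ne_zero_iff.mpr fun k _ => by exact_mod_cast qintZ_natCast_ne_zero k.succ_ne_zero

/-- The Gaussian binomial `qbinom(k + m, k)`, indexed by the two parts so that no subtraction
occurs. -/
def qbinomAdd (k m : ℕ) : RatFunc ℚ := qfactF (k + m) / (qfactF k * qfactF m)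

lemma qbinomAdd_zero_left (m : ℕ) : qbinomAdd 0 m = 1 := by
  simp [qbinomAdd, qfactF_zero, qfactF_ne_zero]

lemma qbinomAdd_zero_right (k : ℕ) : qbinomAdd k 0 = 1 := by
  simp [qbinomAdd, qfactF_zero, qfactF_ne_zero]

lemma qbinomAdd_succ_succ (k m : ℕ) :
    qbinomAdd (k + 1) (m + 1) = qbinomAdd k (m + 1) + RatFunc.X ^ (k + 1) * qbinomAdd (k + 1) m := by
  have hsplit : qintZ (k + m + 2 : ℕ) = qintZ (k + 1 : ℕ) + RatFunc.X ^ (k + 1) * qintZ (m + 1 : ℕ) := by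
    rw [← zpow_natCast, ← qintZ_add]
    push_cast
    ring_nf
  simp only [qbinomAdd, show k + 1 + (m + 1) = k + m + 1 + 1 by ring, show k + (m + 1) = k + m + 1 by ring,
    show k + 1 + m = k + m + 1 by ring, qfactF_succ, hsplit]
  have := qfactF_ne_zero k
  have := qfactF_ne_zero m
  have := qintZ_natCast_ne_zero k.succ_ne_zero
  have := qintZ_natCast_ne_zero m.succ_ne_zero
  field_simp

lemma qbinomAdd_mem_intPolynomials (k m : ℕ) : qbinomAdd k m ∈ intPolynomials := by
  induction k generalizing m with
  | zero => simp [qbinomAdd_zero_left, one_mem]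
  | succ k ihk =>
    induction m with
    | zero => simp [qbinomAdd_zero_right, one_mem]
    | succ m ihm =>
      rw [qbinomAdd_succ_succ]
      exact add_mem (ihk _) (mul_mem (pow_mem RatFunc.X_mem_intPolynomials _) ihm)

lemma qintZ_mul_qbinomAdd (k m : ℕ) :
    qintZ (k + 1 : ℕ) * qbinomAdd (k + 1) m = qintZ (m + 1 : ℕ) * qbinomAdd k (m + 1) := by
  simp only [qbinomAdd, show k + 1 + m = k + (m + 1) by ring, qfactF_succ]
  have := qfactF_ne_zero k
  have := qfactF_ne_zero m
  have := qintZ_natCast_ne_zero k.succ_ne_zero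
  have := qintZ_natCast_ne_zero m.succ_ne_zero
  field_simp

lemma qbinomZ_natCast_add (k m : ℕ) : qbinomZ (k + m : ℕ) k = qbinomAdd k m := by
  rcases Nat.eq_zero_or_pos k with rfl | hk
  · simp [qbinomZ, qbinomAdd_zero_left]
  · rw [qbinomZ, if_neg (by omega), if_neg (by omega), qbinomAdd, Int.toNat_natCast,
      Int.toNat_natCast, show ((k + m : ℕ) : ℤ) - k = (m : ℕ) by push_cast; ring, Int.toNat_natCast]

lemma qbinomZ_of_neg {n p : ℤ} (hp : p < 0) : qbinomZ n p = 0 := by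
  rw [qbinomZ, if_neg hp.ne, if_pos (Or.inl hp)]

lemma qbinomZ_of_pos_of_lt {n p : ℤ} (hp : 0 < p) (hn : n < p) : qbinomZ n p = 0 := by
  rw [qbinomZ, if_neg hp.ne', if_pos (Or.inr (max_lt hp hn))]

lemma qbinomZ_mem_intPolynomials (n p : ℤ) : qbinomZ n p ∈ intPolynomials := by
  rcases lt_trichotomy p 0 with hp | rfl | hp
  · rw [qbinomZ_of_neg hp]; exact zero_mem _
  · rw [qbinomZ, if_pos rfl]; exact one_mem _
  · by_cases hn : p ≤ n
    · lift p to ℕ using hp.le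
      obtain ⟨m, rfl⟩ : ∃ m : ℕ, n = ((p + m : ℕ) : ℤ) := ⟨(n - p).toNat, by omega⟩
      rw [qbinomZ_natCast_add]
      exact qbinomAdd_mem_intPolynomials p m
    · rw [qbinomZ_of_pos_of_lt hp (not_le.mp hn)]; exact zero_mem _

lemma qintZ_mul_qbinomZ {x : ℤ} (hx : 0 < x) (p : ℤ) :
    qintZ p * qbinomZ (x + p - 1) p = qintZ x * qbinomZ (x + p - 1) (p - 1) := by
  rcases lt_trichotomy p 0 with hp | rfl | hp
  · rw [qbinomZ_of_neg hp, qbinomZ_of_neg (p := p - 1) (by omega), mul_zero, mul_zero]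
  · rw [qintZ_zero, zero_mul, qbinomZ_of_neg (p := 0 - 1) (by omega), mul_zero]
  · lift x to ℕ using hx.le
    lift p to ℕ using hp.le
    obtain ⟨m, rfl⟩ : ∃ m, x = m + 1 := Nat.exists_eq_succ_of_ne_zero (by omega)
    obtain ⟨k, rfl⟩ : ∃ k, p = k + 1 := Nat.exists_eq_succ_of_ne_zero (by omega)
    have h₁ := qbinomZ_natCast_add (k + 1) m
    have h₂ := qbinomZ_natCast_add k (m + 1)
    push_cast at h₁ h₂ ⊢
    rw [show (m : ℤ) + 1 + (k + 1) - 1 = k + 1 + m by ring, add_sub_cancel_right, h₁,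
      show (k : ℤ) + 1 + m = k + (m + 1) by ring, h₂]
    exact_mod_cast qintZ_mul_qbinomAdd k m

lemma qintZ_mul_qbinomZ_of_nonpos {x : ℤ} (hx : x ≤ 0) (p : ℤ) :
    qintZ p * qbinomZ (x + p - 1) p = 0 := by
  rcases lt_trichotomy p 0 with hp | rfl | hp
  · rw [qbinomZ_of_neg hp, mul_zero]
  · rw [qintZ_zero, zero_mul]
  · rw [qbinomZ_of_pos_of_lt hp (by omega), mul_zero]

lemma Fq_succ_succ (N : ℕ) (a : ℕ → ℤ) :
    Fq (N + 2) a = Fq (N + 1) a * qbinomZ (a N + a (N + 1) - 1) (a (N + 1)) :=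
  prod_range_succ _ N

lemma zpow_mul_qintZ_div_mul_Fq_mem_intPolynomials (a : ℕ → ℤ) (j : ℕ) :
    RatFunc.X ^ (∑ i ∈ range j, a i) * (qintZ (a j) / qintZ (a 0)) * Fq (j + 1) a
      ∈ intPolynomials := by
  induction j with
  | zero =>
    by_cases h : qintZ (a 0) = 0
    · simp [h, zero_mem]
    · simp [Fq, div_self h, one_mem]
  | succ j ih =>
    rw [sum_range_succ, zpow_add₀ RatFunc.X_ne_zero, Fq_succ_succ]
    by_cases hj : 0 < a j
    · have key := qintZ_mul_qbinomZ hj (a (j + 1))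
      have hstep : RatFunc.X ^ (∑ i ∈ range j, a i) * RatFunc.X ^ a j *
            (qintZ (a (j + 1)) / qintZ (a 0)) *
            (Fq (j + 1) a * qbinomZ (a j + a (j + 1) - 1) (a (j + 1))) =
          RatFunc.X ^ (∑ i ∈ range j, a i) * (qintZ (a j) / qintZ (a 0)) * Fq (j + 1) a *
            (RatFunc.X ^ a j * qbinomZ (a j + a (j + 1) - 1) (a (j + 1) - 1)) := by
        linear_combination RatFunc.X ^ (∑ i ∈ range j, a i) * RatFunc.X ^ a j / qintZ (a 0) *
          Fq (j + 1) a * key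
      rw [hstep]
      exact mul_mem ih (mul_mem (RatFunc.X_zpow_mem_intPolynomials hj.le)
        (qbinomZ_mem_intPolynomials _ _))
    · have hzero := qintZ_mul_qbinomZ_of_nonpos (not_lt.mp hj) (a (j + 1))
      have hstep : RatFunc.X ^ (∑ i ∈ range j, a i) * RatFunc.X ^ a j *
            (qintZ (a (j + 1)) / qintZ (a 0)) *
            (Fq (j + 1) a * qbinomZ (a j + a (j + 1) - 1) (a (j + 1))) = 0 := by
        linear_combination RatFunc.X ^ (∑ i ∈ range j, a i) * RatFunc.X ^ a j / qintZ (a 0) *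
          Fq (j + 1) a * hzero
      rw [hstep]
      exact zero_mem _

end

theorem qint_ratio_mul_Fq_mem_int_polynomials_general
    (n : ℕ) (a : ℕ → ℤ) :
    ∃ P : Polynomial ℤ,
      qintZ (∑ i ∈ Finset.range n, a i) / qintZ (a 0) * Fq n a =
        algebraMap (Polynomial ℚ) (RatFunc ℚ) (P.map (Int.castRingHom ℚ)) := by
  suffices h : qintZ (∑ i ∈ range n, a i) / qintZ (a 0) * Fq n a ∈ intPolynomials by
    obtain ⟨P, hP⟩ := h
    exact ⟨P, hP.symm⟩
  rw [qintZ_sum, sum_div, sum_mul]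
  refine sum_mem fun j hj => ?_
  have hsplit : Fq n a = Fq (j + 1) a *
      ∏ i ∈ Ico j (n - 1), qbinomZ (a i + a (i + 1) - 1) (a (i + 1)) := by
    rw [Fq, Fq, Nat.add_sub_cancel, prod_range_mul_prod_Ico _ (Nat.le_sub_one_of_lt (mem_range.mp hj))]
  rw [hsplit, mul_div_assoc, ← mul_assoc]
  exact mul_mem (zpow_mul_qintZ_div_mul_Fq_mem_intPolynomials a j)
    (prod_mem fun i _ => qbinomZ_mem_intPolynomials _ _)

/-- For integers `n ≥ 1` and `a_1, …, a_n` with `a_1 > 0`, the expression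
`([a_1 + ⋯ + a_n]/[a_1]) · F_q(a_1, …, a_n)` is a polynomial in `q` with integer
coefficients, i.e. it belongs to `ℤ[q]`. -/
theorem qint_ratio_mul_Fq_mem_int_polynomials
    (n : ℕ) (hn : 1 ≤ n) (a : ℕ → ℤ) (ha : 0 < a 0) :
    ∃ P : Polynomial ℤ,
      qintZ (∑ i ∈ Finset.range n, a i) / qintZ (a 0) * Fq n a =
        algebraMap (Polynomial ℚ) (RatFunc ℚ) (P.map (Int.castRingHom ℚ)) :=
  qint_ratio_mul_Fq_mem_int_polynomials_general n a
end

section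
/- Let q_0 ≠ 1 be a primitive l-th root of unity, and let a_1, a_2 be positive integers with l dividing a_1. Then the (q - q_0)-adic valuation of the Gaussian binomial coefficient qbinom(a_1 + a_2 - 1, a_2) ∈ ℤ[q] equals 0 if l divides a_2, and equals 1 if l does not divide a_2. -/
/-!
Multiplying `[n]` by `q - 1` gives the separable polynomial `q^n - 1`, so a root of unity
`q₀ ≠ 1` of order `l` is a simple root of `[n]` when `l ∣ n` and no root otherwise. Hence `q₀`
vanishes to order `⌊n / l⌋` in `[n]!` and to order `⌊n / l⌋ - ⌊p / l⌋ - ⌊(n - p) / l⌋` in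
`qbinom(n, p)`. For `n = a₁ + a₂ - 1`, `p = a₂` and `l ∣ a₁` this is `⌈a₂ / l⌉ - ⌊a₂ / l⌋`.
-/

open Polynomial

noncomputable section

/-- The `q`-integer `[n] = 1 + q + ⋯ + q^{n-1}` in `ℂ[q]`. -/
def qintC (n : ℕ) : Polynomial ℂ := ∑ k ∈ Finset.range n, X ^ k

/-- The `q`-factorial `[n]!` in `ℂ[q]`. -/
def qfactC (n : ℕ) : Polynomial ℂ := ∏ k ∈ Finset.range n, qintC (k + 1)

/-- The Gaussian binomial coefficient `qbinom(n, p) = [n]!/([p]![n-p]!)`, which lies in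
the polynomial ring: the quotient is exact, and is computed here by division by the
monic polynomial `[p]![n-p]!`. -/
def qbinomC (n p : ℕ) : Polynomial ℂ :=
  if p ≤ n then qfactC n /ₘ (qfactC p * qfactC (n - p)) else 0

end

namespace Nat

theorem add_sub_one_div_sub_div {l : ℕ} (hl : 0 < l) (a : ℕ) :
    (a + l - 1) / l - a / l = if l ∣ a then 0 else 1 := by
  obtain ⟨c, r, hr, rfl⟩ : ∃ c r, r < l ∧ a = r + l * c :=
    ⟨a / l, a % l, mod_lt a hl, (mod_add_div a l).symm⟩
  rw [show r + l * c + l - 1 = r + l - 1 + l * c by omega, add_mul_div_left _ _ hl,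
    add_mul_div_left _ _ hl, div_eq_of_lt hr, zero_add, Nat.add_sub_cancel]
  simp only [Nat.dvd_add_left (dvd_mul_right l c)]
  rcases r.eq_zero_or_pos with rfl | hr0
  · simp [div_eq_of_lt (sub_one_lt_of_lt hl)]
  · rw [if_neg (not_dvd_of_pos_of_lt hr0 hr), Nat.div_eq_of_lt_le (k := 1) (by omega) (by omega)]

theorem add_sub_one_div_sub_div_of_dvd {l m : ℕ} (hm : 0 < m) (hl : l ∣ m) (a : ℕ) :
    (m + a - 1) / l - a / l - (m - 1) / l = if l ∣ a then 0 else 1 := by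
  obtain ⟨b, rfl⟩ := hl
  obtain ⟨hl0, hb0⟩ := CanonicallyOrderedAdd.mul_pos.1 hm
  have hshift : ∀ a, (l * b + a - 1) / l = (a + l - 1) / l + (b - 1) := fun a => by
    have hlb : l ≤ l * b := Nat.le_mul_of_pos_right l hb0
    rw [show l * b + a - 1 = a + l - 1 + l * (b - 1) by rw [Nat.mul_sub_one]; omega,
      add_mul_div_left _ _ hl0]
  have hceil := add_sub_one_div_sub_div hl0 a
  rw [hshift, ← add_zero (l * b), hshift 0, zero_add, div_eq_of_lt (sub_one_lt_of_lt hl0)]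
  omega

end Nat

theorem qintC_mul_X_sub_one (n : ℕ) : qintC n * (X - 1) = X ^ n - 1 :=
  geom_sum_mul X n

theorem qintC_monic {n : ℕ} (hn : n ≠ 0) : (qintC n).Monic :=
  monic_geom_sum_X hn

theorem qfactC_monic (n : ℕ) : (qfactC n).Monic :=
  monic_prod_of_monic _ _ fun k _ => qintC_monic k.succ_ne_zero

theorem qintC_isRoot_iff {a : ℂ} (ha : a ≠ 1) (n : ℕ) : (qintC n).IsRoot a ↔ a ^ n = 1 := by
  have h := congrArg (eval a) (qintC_mul_X_sub_one n)
  simp only [eval_mul, eval_sub, eval_pow, eval_X, eval_one] at h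
  rw [IsRoot.def, ← sub_eq_zero (a := a ^ n), ← h, mul_eq_zero, sub_eq_zero, or_iff_left ha]

theorem qintC_separable {n : ℕ} (hn : n ≠ 0) : (qintC n).Separable := by
  refine Separable.of_mul_left (g := X - 1) ?_
  rw [qintC_mul_X_sub_one, ← C_1]
  exact separable_X_pow_sub_C 1 (Nat.cast_ne_zero.2 hn) one_ne_zero

theorem rootMultiplicity_qintC {a : ℂ} (ha : a ≠ 1) {n : ℕ} (hn : n ≠ 0) :
    rootMultiplicity a (qintC n) = if a ^ n = 1 then 1 else 0 := by
  split_ifs with h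
  · refine le_antisymm (rootMultiplicity_le_one_of_separable (qintC_separable hn) a) ?_
    exact (rootMultiplicity_pos (qintC_monic hn).ne_zero).2 ((qintC_isRoot_iff ha n).2 h)
  · exact rootMultiplicity_eq_zero (mt (qintC_isRoot_iff ha n).1 h)

/-- For `d = 0`, i.e. `a` not a root of unity, both sides vanish since `n / 0 = 0`. -/
theorem rootMultiplicity_qfactC {a : ℂ} (ha : a ≠ 1) {d : ℕ} (hprim : IsPrimitiveRoot a d)
    (n : ℕ) : rootMultiplicity a (qfactC n) = n / d := by
  induction n with
  | zero => simp [qfactC]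
  | succ n ih =>
    have hprod : qfactC (n + 1) = qfactC n * qintC (n + 1) := Finset.prod_range_succ _ _
    rw [hprod, rootMultiplicity_mul (hprod ▸ (qfactC_monic _).ne_zero), ih,
      rootMultiplicity_qintC ha n.succ_ne_zero, Nat.succ_div]
    simp only [hprim.pow_eq_one_iff_dvd]

theorem eval_one_qfactC (n : ℕ) : (qfactC n).eval 1 = n.factorial := by
  simp [qfactC, qintC, eval_prod, eval_finsetSum, ← Finset.prod_range_add_one_eq_factorial]

theorem rootMultiplicity_one_qfactC (n : ℕ) : rootMultiplicity 1 (qfactC n) = 0 :=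
  rootMultiplicity_eq_zero (by simp [IsRoot, eval_one_qfactC, n.factorial_ne_zero])

/-- Over `ℂ` divisibility is checked on root multiplicities; at `a ≠ 1` of order `d` this is the
superadditivity of `⌊· / d⌋`. -/
theorem qfactC_mul_qfactC_dvd {p n : ℕ} (h : p ≤ n) : qfactC p * qfactC (n - p) ∣ qfactC n := by
  have hne : qfactC p * qfactC (n - p) ≠ 0 := ((qfactC_monic _).mul (qfactC_monic _)).ne_zero
  refine (IsAlgClosed.splits _).dvd_of_roots_le_roots hne (Multiset.le_iff_count.2 fun a => ?_)
  rw [count_roots, count_roots, rootMultiplicity_mul hne]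
  by_cases ha : a = 1
  · simp [ha, rootMultiplicity_one_qfactC]
  · have hprim := IsPrimitiveRoot.orderOf a
    rw [rootMultiplicity_qfactC ha hprim, rootMultiplicity_qfactC ha hprim,
      rootMultiplicity_qfactC ha hprim]
    calc p / orderOf a + (n - p) / orderOf a ≤ (p + (n - p)) / orderOf a :=
          Nat.div_add_div_le_add_div
      _ = n / orderOf a := by rw [Nat.add_sub_cancel' h]

theorem qfactC_eq_mul_qbinomC {p n : ℕ} (h : p ≤ n) :
    qfactC n = qfactC p * qfactC (n - p) * qbinomC n p := by
  obtain ⟨r, hr⟩ := qfactC_mul_qfactC_dvd h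
  rw [qbinomC, if_pos h, hr,
    mul_divByMonic_cancel_left _ ((qfactC_monic _).mul (qfactC_monic _))]

theorem rootMultiplicity_qbinomC {a : ℂ} (ha : a ≠ 1) {d : ℕ} (hprim : IsPrimitiveRoot a d)
    {p n : ℕ} (h : p ≤ n) :
    rootMultiplicity a (qbinomC n p) = n / d - p / d - (n - p) / d := by
  have hfact := congrArg (rootMultiplicity a) (qfactC_eq_mul_qbinomC h)
  rw [rootMultiplicity_mul (qfactC_eq_mul_qbinomC h ▸ (qfactC_monic n).ne_zero),
    rootMultiplicity_mul ((qfactC_monic _).mul (qfactC_monic _)).ne_zero] at hfact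
  simp only [rootMultiplicity_qfactC ha hprim] at hfact
  omega

theorem rootMultiplicity_qbinom_general
    (l : ℕ) (q₀ : ℂ) (hq₀ : q₀ ≠ 1) (hprim : IsPrimitiveRoot q₀ l)
    (a₁ a₂ : ℕ) (h₁ : 0 < a₁) (hl : l ∣ a₁) :
    rootMultiplicity q₀ (qbinomC (a₁ + a₂ - 1) a₂) = (if l ∣ a₂ then 0 else 1) := by
  rw [rootMultiplicity_qbinomC hq₀ hprim (by omega), show a₁ + a₂ - 1 - a₂ = a₁ - 1 by omega,
    Nat.add_sub_one_div_sub_div_of_dvd h₁ hl]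

/-- Let `q₀ ≠ 1` be a primitive `l`-th root of unity and `a₁, a₂` positive integers with
`l ∣ a₁`. Then the `(q - q₀)`-adic valuation (order of vanishing at `q₀`) of
`qbinom(a₁ + a₂ - 1, a₂)` is `0` if `l ∣ a₂` and `1` if `l ∤ a₂`. -/
theorem rootMultiplicity_qbinom
    (l : ℕ) (q₀ : ℂ) (hq₀ : q₀ ≠ 1) (hprim : IsPrimitiveRoot q₀ l)
    (a₁ a₂ : ℕ) (h₁ : 0 < a₁) (h₂ : 0 < a₂) (hl : l ∣ a₁) :
    rootMultiplicity q₀ (qbinomC (a₁ + a₂ - 1) a₂) = (if l ∣ a₂ then 0 else 1) :=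
  rootMultiplicity_qbinom_general l q₀ hq₀ hprim a₁ a₂ h₁ hl
end

section
/- In the ring of formal power series in one variable X over ℤ[q], the identity ∏_{s=0}^{n-1} (1 - q^s X)^{-1} = ∑_{k≥0} qbinom(n+k-1, k) X^k holds for every n ∈ ℕ. Equivalently, ∑_{k≥0} qbinom(n+k-1,k) X^k · ∏_{s=0}^{n-1}(1 - q^s X) = 1. -/
open Polynomial

noncomputable section

/-- The `q`-integer `[n] = 1 + q + ⋯ + q^{n-1}` in `ℤ[q]`. -/
def qint (n : ℕ) : Polynomial ℤ := ∑ k ∈ Finset.range n, X ^ k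

/-- The `q`-factorial `[n]!` in `ℤ[q]`. -/
def qfact (n : ℕ) : Polynomial ℤ := ∏ k ∈ Finset.range n, qint (k + 1)

/-- The Gaussian binomial coefficient `qbinom(n, p) = [n]!/([p]![n-p]!) ∈ ℤ[q]`; the
quotient is exact and is computed by division by the monic polynomial `[p]![n-p]!`. -/
def qbinom (n p : ℕ) : Polynomial ℤ :=
  if p ≤ n then qfact n /ₘ (qfact p * qfact (n - p)) else 0

end

/-!
Multiplying `∑ₖ qbinom(n+k, k) Xᵏ` by `1 - qⁿ X` gives `∑ₖ qbinom(n+k-1, k) Xᵏ`: on coefficients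
this is the `q`-Pascal rule `qbinom(m+1, k+1) = q^(m-k) qbinom(m, k) + qbinom(m, k+1)`. Peeling
off the factors of the product one at a time thus reduces the identity to `n = 0`. The Pascal
rule holds because the polynomials `qbinomRec` it generates satisfy
`qbinomRec m k · [k]! [m-k]! = [m]!` (from `[m+1] = [m-k] + q^(m-k) [k+1]`), so they are the
exact quotients defining `qbinom`.
-/

noncomputable def qbinomRec : ℕ → ℕ → Polynomial ℤ
  | _, 0 => 1
  | 0, _ + 1 => 0
  | n + 1, p + 1 => X ^ (n - p) * qbinomRec n p + qbinomRec n (p + 1)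

theorem qint_zero : qint 0 = 0 := rfl

theorem qint_add (a b : ℕ) : qint (a + b) = qint a + X ^ a * qint b := by
  simp only [qint, Finset.sum_range_add, pow_add, Finset.mul_sum]

theorem qint_monic (n : ℕ) : (qint (n + 1)).Monic := by
  simpa [qint] using monic_geom_sum_X (R := ℤ) n.succ_ne_zero

theorem qfact_zero : qfact 0 = 1 := rfl

theorem qfact_succ (n : ℕ) : qfact (n + 1) = qfact n * qint (n + 1) :=
  Finset.prod_range_succ _ _

theorem qfact_monic (n : ℕ) : (qfact n).Monic :=
  monic_prod_of_monic _ _ fun k _ => qint_monic k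

theorem qbinomRec_zero_right (n : ℕ) : qbinomRec n 0 = 1 := by
  cases n <;> rfl

theorem qbinomRec_eq_zero_of_lt {n p : ℕ} (h : n < p) : qbinomRec n p = 0 := by
  induction n generalizing p with
  | zero => obtain ⟨p, rfl⟩ := Nat.exists_eq_add_one.mpr h; rfl
  | succ n ih =>
    obtain ⟨p, rfl⟩ := Nat.exists_eq_add_one.mpr (Nat.zero_lt_of_lt h)
    simp only [qbinomRec, ih (by omega : n < p), ih (by omega : n < p + 1), mul_zero, add_zero]

theorem qbinomRec_mul_qfact {n p : ℕ} (h : p ≤ n) :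
    qbinomRec n p * (qfact p * qfact (n - p)) = qfact n := by
  induction n generalizing p with
  | zero =>
    obtain rfl : p = 0 := by omega
    simp [qbinomRec_zero_right, qfact_zero]
  | succ n ih =>
    cases p with
    | zero => simp [qbinomRec_zero_right, qfact_zero]
    | succ p =>
      have hp : p ≤ n := by omega
      have left := ih hp
      have right : qbinomRec n (p + 1) * (qfact (p + 1) * qfact (n - p)) =
          qint (n - p) * qfact n := by
        rcases hp.eq_or_lt with rfl | hlt
        · simp [qbinomRec_eq_zero_of_lt, qint_zero]
        · rw [show n - p = n - (p + 1) + 1 by omega, qfact_succ (n - (p + 1)), ← ih hlt]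
          ring
      calc qbinomRec (n + 1) (p + 1) * (qfact (p + 1) * qfact (n + 1 - (p + 1)))
          = X ^ (n - p) * qint (p + 1) * (qbinomRec n p * (qfact p * qfact (n - p))) +
              qbinomRec n (p + 1) * (qfact (p + 1) * qfact (n - p)) := by
            rw [qbinomRec, Nat.add_sub_add_right, qfact_succ p]
            ring
        _ = qfact n * (qint (n - p) + X ^ (n - p) * qint (p + 1)) := by
            rw [left, right]
            ring
        _ = qfact (n + 1) := by
            rw [← qint_add, show n - p + (p + 1) = n + 1 by omega, qfact_succ]

theorem qbinom_eq_qbinomRec (n p : ℕ) : qbinom n p = qbinomRec n p := by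
  unfold qbinom
  split_ifs with h
  · rw [← qbinomRec_mul_qfact h, mul_comm,
      mul_divByMonic_cancel_left _ ((qfact_monic p).mul (qfact_monic (n - p)))]
  · rw [qbinomRec_eq_zero_of_lt (by omega)]

theorem qbinom_zero_right (n : ℕ) : qbinom n 0 = 1 := by
  rw [qbinom_eq_qbinomRec, qbinomRec_zero_right]

theorem qbinom_eq_zero_of_lt {n p : ℕ} (h : n < p) : qbinom n p = 0 :=
  if_neg (by omega)

theorem qbinom_succ_succ (n p : ℕ) :
    qbinom (n + 1) (p + 1) = X ^ (n - p) * qbinom n p + qbinom n (p + 1) := by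
  simp only [qbinom_eq_qbinomRec, qbinomRec]

namespace PowerSeries

variable {R : Type*} [CommRing R]

theorem coeff_succ_mul_one_sub_C_mul_X (f : PowerSeries R) (a : R) (k : ℕ) :
    coeff (k + 1) (f * (1 - C a * PowerSeries.X)) = coeff (k + 1) f - a * coeff k f := by
  rw [mul_sub, mul_one, mul_left_comm, map_sub, coeff_C_mul, coeff_succ_mul_X]

end PowerSeries

theorem qbinom_series_mul_one_sub_C_mul_X (n : ℕ) :
    (PowerSeries.mk fun k => qbinom (n + k) k) *
        (1 - PowerSeries.C (R := Polynomial ℤ) (X ^ n) * PowerSeries.X) =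
      PowerSeries.mk fun k => qbinom (n + k - 1) k := by
  ext k : 1
  cases k with
  | zero => simp [qbinom_zero_right]
  | succ k =>
    rw [PowerSeries.coeff_succ_mul_one_sub_C_mul_X]
    simp only [PowerSeries.coeff_mk, ← Nat.add_assoc, Nat.add_sub_cancel, qbinom_succ_succ]
    ring

/-- In the ring of formal power series in one variable `X` over `ℤ[q]`, the identity
`∏_{s=0}^{n-1}(1 - q^s X)^{-1} = ∑_{k≥0} qbinom(n+k-1, k) X^k` holds for every `n`,
stated in the equivalent form
`(∑_{k≥0} qbinom(n+k-1, k) X^k) · ∏_{s=0}^{n-1}(1 - q^s X) = 1`. -/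
theorem qbinom_generating_identity (n : ℕ) :
    (PowerSeries.mk fun k => qbinom (n + k - 1) k) *
        ∏ s ∈ Finset.range n,
          (1 - PowerSeries.C (R := Polynomial ℤ) (Polynomial.X ^ s) * PowerSeries.X) = 1 := by
  induction n with
  | zero =>
    ext k : 1
    cases k with
    | zero => simp [qbinom_zero_right]
    | succ k => simp [qbinom_eq_zero_of_lt]
  | succ n ih =>
    rw [Finset.prod_range_succ, ← mul_assoc, mul_right_comm,
      show (fun k => qbinom (n + 1 + k - 1) k) = fun k => qbinom (n + k) k by
        simp only [Nat.add_right_comm n 1, Nat.add_sub_cancel],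
      qbinom_series_mul_one_sub_C_mul_X, ih]
end
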